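/- arXiv:1401.2335 — 2 statements merged into one kernel-verified Lean document; each statement's English description precedes it below -/
import Mathlib

section
/- For every n ≥ 0, every q in {1, …, 2^n}, and all x, y in {1, …, 2^n}, the sum ψ_{q,n}(x, y) = Σ_{r : r ⊑_n q} φ_{r,n}(x, y) equals 1 if q belongs to Col_n(y) but not to Col_n(x *_n y), and equals 0 otherwise. -/
/-- `op` is the Laver table operation on `{1, …, 2^n}`: it maps the set to itself,
satisfies `x * 1 = x + 1` for `x < 2^n`, `2^n * 1 = 1`, and
`x * (y * 1) = (x * y) * (x * 1)`. -/
def IsLaverOp (n : ℕ) (op : ℕ → ℕ → ℕ) : Prop :=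
  (∀ x y, 1 ≤ x → x ≤ 2 ^ n → 1 ≤ y → y ≤ 2 ^ n → 1 ≤ op x y ∧ op x y ≤ 2 ^ n) ∧
  (∀ x, 1 ≤ x → x < 2 ^ n → op x 1 = x + 1) ∧
  (op (2 ^ n) 1 = 1) ∧
  (∀ x y, 1 ≤ x → x ≤ 2 ^ n → 1 ≤ y → y ≤ 2 ^ n → op x (op y 1) = op (op x y) (op x 1))

/-- The coboundary `φ_{q,n}(x, y) = δ_{y,q} − δ_{x *_n y, q}`. -/
def laverPhi (op : ℕ → ℕ → ℕ) (q x y : ℕ) : ℤ :=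
  (if y = q then 1 else 0) - (if op x y = q then 1 else 0)

/-!
Summing `φ_{r,n}(x, y) = δ_{y,r} − δ_{x*y,r}` over the `r` with `q ∈ Col(r)` leaves
`[q ∈ Col(y)] − [q ∈ Col(x * y)]`, so it suffices that `Col(x * y) ⊆ Col(y)`. By left
self-distributivity `p * (u * y) = (p * u) * (p * y)`, and `p < p * u` unless `p = 2^n`, whose row
is the identity; so a downward induction on `p` writes every `p * (u * y)` as some `w * y`.

Self-distributivity is only assumed for `z = 1`; the general law follows by induction, downward
in `x` and `y` and upward in `z`, using `x < x * y` for `x < 2^n`.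
-/

def laverColumn (n : ℕ) (op : ℕ → ℕ → ℕ) (r : ℕ) : Set ℕ :=
  {q | ∃ p, 1 ≤ p ∧ p ≤ 2 ^ n ∧ op p r = q}

theorem Finset.sum_ite_sub_ite_eq_ite_and_not {α : Type*} [DecidableEq α] {s : Finset α}
    (P : α → Prop) [DecidablePred P] {y z : α} (hy : y ∈ s) (hz : z ∈ s)
    (hzy : P z → P y) :
    ∑ r ∈ s, (if P r then ((if y = r then 1 else 0) - (if z = r then 1 else 0) : ℤ) else 0) =
      if P y ∧ ¬ P z then 1 else 0 := by
  rw [← Finset.sum_filter, Finset.sum_sub_distrib, Finset.sum_ite_eq, Finset.sum_ite_eq]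
  by_cases hPy : P y <;> by_cases hPz : P z <;> simp_all

namespace IsLaverOp

variable {n : ℕ} {op : ℕ → ℕ → ℕ}

theorem op_mem (h : IsLaverOp n op) {x y : ℕ} (hx1 : 1 ≤ x) (hx2 : x ≤ 2 ^ n) (hy1 : 1 ≤ y)
    (hy2 : y ≤ 2 ^ n) : 1 ≤ op x y ∧ op x y ≤ 2 ^ n :=
  h.1 x y hx1 hx2 hy1 hy2

theorem op_one (h : IsLaverOp n op) {x : ℕ} (hx1 : 1 ≤ x) (hx2 : x < 2 ^ n) : op x 1 = x + 1 :=
  h.2.1 x hx1 hx2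

theorem op_succ (h : IsLaverOp n op) {x z : ℕ} (hx1 : 1 ≤ x) (hx2 : x ≤ 2 ^ n) (hz1 : 1 ≤ z)
    (hz2 : z < 2 ^ n) : op x (z + 1) = op (op x z) (op x 1) := by
  rw [← h.op_one hz1 hz2]
  exact h.2.2.2 x z hx1 hx2 hz1 hz2.le

theorem top_op (h : IsLaverOp n op) {y : ℕ} (hy1 : 1 ≤ y) (hy2 : y ≤ 2 ^ n) :
    op (2 ^ n) y = y := by
  induction y, hy1 using Nat.le_induction with
  | base => exact h.2.2.1
  | succ y hy1 ih =>
    rw [h.op_succ Nat.one_le_two_pow le_rfl hy1 (by omega), ih (by omega), h.2.2.1,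
      h.op_one hy1 (by omega)]

theorem lt_op (h : IsLaverOp n op) {x y : ℕ} (hx1 : 1 ≤ x) (hx2 : x < 2 ^ n) (hy1 : 1 ≤ y)
    (hy2 : y ≤ 2 ^ n) : x < op x y := by
  obtain rfl | ⟨z, rfl, hz1⟩ : y = 1 ∨ ∃ z, y = z + 1 ∧ 1 ≤ z := by
    rcases y with _ | _ | z <;> simp_all
  · rw [h.op_one hx1 hx2]
    omega
  · have hxz : x < op x z := lt_op h hx1 hx2 hz1 (by omega)
    rw [h.op_succ hx1 hx2.le hz1 (by omega), h.op_one hx1 hx2]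
    rcases (h.op_mem hx1 hx2.le hz1 (by omega)).2.lt_or_eq with hlt | heq
    · exact hxz.trans (lt_op h (by omega) hlt (by omega) (by omega))
    · rw [heq, h.top_op (by omega) (by omega)]
      omega
termination_by (2 ^ n - x, y)

theorem op_top (h : IsLaverOp n op) {x : ℕ} (hx1 : 1 ≤ x) (hx2 : x ≤ 2 ^ n) :
    op x (2 ^ n) = 2 ^ n := by
  rcases hx2.lt_or_eq with hx2 | rfl
  · have hmem := h.op_mem hx1 hx2.le Nat.one_le_two_pow le_rfl
    have hx_lt := h.lt_op hx1 hx2 Nat.one_le_two_pow le_rfl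
    by_contra hne
    -- `x + 1 = x * (2^n * 1) = (x * 2^n) * (x + 1) > x * 2^n > x`, which is absurd
    have hdist := h.2.2.2 x (2 ^ n) hx1 hx2.le Nat.one_le_two_pow le_rfl
    rw [h.2.2.1, h.op_one hx1 hx2] at hdist
    have := h.lt_op hmem.1 (lt_of_le_of_ne hmem.2 hne) (by omega) (by omega) (y := x + 1)
    omega
  · exact h.top_op Nat.one_le_two_pow le_rfl

theorem self_distrib (h : IsLaverOp n op) {x y z : ℕ} (hx1 : 1 ≤ x) (hx2 : x ≤ 2 ^ n)
    (hy1 : 1 ≤ y) (hy2 : y ≤ 2 ^ n) (hz1 : 1 ≤ z) (hz2 : z ≤ 2 ^ n) :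
    op x (op y z) = op (op x y) (op x z) := by
  have hyz := h.op_mem hy1 hy2 hz1 hz2
  have hxz := h.op_mem hx1 hx2 hz1 hz2
  rcases hx2.lt_or_eq with hx2 | rfl
  swap
  · rw [h.top_op hyz.1 hyz.2, h.top_op hy1 hy2, h.top_op hz1 hz2]
  rcases hy2.lt_or_eq with hy2 | rfl
  swap
  · rw [h.top_op hz1 hz2, h.op_top hx1 hx2.le, h.top_op hxz.1 hxz.2]
  obtain rfl | ⟨w, rfl, hw1⟩ : z = 1 ∨ ∃ w, z = w + 1 ∧ 1 ≤ w := by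
    rcases z with _ | _ | w <;> simp_all
  · exact h.2.2.2 x y hx1 hx2.le hy1 hy2.le
  have hxy := h.op_mem hx1 hx2.le hy1 hy2.le
  have hyw := h.op_mem hy1 hy2.le hw1 (by omega)
  have hxw := h.op_mem hx1 hx2.le hw1 (by omega)
  have hy_lt : y < op y w := h.lt_op hy1 hy2 hw1 (by omega)
  have hx_lt : x < op x y := h.lt_op hx1 hx2 hy1 hy2.le
  have hy1' := h.op_mem hy1 hy2.le le_rfl Nat.one_le_two_pow
  have hx1' := h.op_mem hx1 hx2.le le_rfl Nat.one_le_two_pow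
  calc op x (op y (w + 1))
      = op x (op (op y w) (op y 1)) := by rw [h.op_succ hy1 hy2.le hw1 (by omega)]
    _ = op (op x (op y w)) (op x (op y 1)) :=
        self_distrib h hx1 hx2.le hyw.1 hyw.2 hy1'.1 hy1'.2
    _ = op (op (op x y) (op x w)) (op (op x y) (op x 1)) := by
        rw [self_distrib h hx1 hx2.le hy1 hy2.le hw1 (by omega),
          h.2.2.2 x y hx1 hx2.le hy1 hy2.le]
    _ = op (op x y) (op (op x w) (op x 1)) :=
        (self_distrib h hxy.1 hxy.2 hxw.1 hxw.2 hx1'.1 hx1'.2).symm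
    _ = op (op x y) (op x (w + 1)) := by rw [h.op_succ hx1 hx2.le hw1 (by omega)]
termination_by (2 ^ n - x, 2 ^ n - y, z)

theorem op_op_mem_laverColumn (h : IsLaverOp n op) {p u y : ℕ} (hp1 : 1 ≤ p)
    (hp2 : p ≤ 2 ^ n) (hu1 : 1 ≤ u) (hu2 : u ≤ 2 ^ n) (hy1 : 1 ≤ y) (hy2 : y ≤ 2 ^ n) :
    op p (op u y) ∈ laverColumn n op y := by
  rcases hp2.lt_or_eq with hp2 | rfl
  · have hpu := h.op_mem hp1 hp2.le hu1 hu2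
    have hp_lt : p < op p u := h.lt_op hp1 hp2 hu1 hu2
    rw [h.self_distrib hp1 hp2.le hu1 hu2 hy1 hy2]
    exact op_op_mem_laverColumn h hpu.1 hpu.2 hp1 hp2.le hy1 hy2
  · have huy := h.op_mem hu1 hu2 hy1 hy2
    exact ⟨u, hu1, hu2, (h.top_op huy.1 huy.2).symm⟩
termination_by 2 ^ n - p

theorem laverColumn_op_subset (h : IsLaverOp n op) {x y : ℕ} (hx1 : 1 ≤ x) (hx2 : x ≤ 2 ^ n)
    (hy1 : 1 ≤ y) (hy2 : y ≤ 2 ^ n) : laverColumn n op (op x y) ⊆ laverColumn n op y := by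
  rintro q ⟨p, hp1, hp2, rfl⟩
  exact h.op_op_mem_laverColumn hp1 hp2 hx1 hx2 hy1 hy2

end IsLaverOp

open Classical in
theorem laver_psi_values_general (n : ℕ) (op : ℕ → ℕ → ℕ) (h : IsLaverOp n op)
    (q x y : ℕ)
    (hx1 : 1 ≤ x) (hx2 : x ≤ 2 ^ n) (hy1 : 1 ≤ y) (hy2 : y ≤ 2 ^ n) :
    (∑ r ∈ Finset.Icc 1 (2 ^ n),
        if ∃ p, 1 ≤ p ∧ p ≤ 2 ^ n ∧ op p r = q then laverPhi op r x y else 0) =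
      if (∃ p, 1 ≤ p ∧ p ≤ 2 ^ n ∧ op p y = q) ∧
          ¬ (∃ p, 1 ≤ p ∧ p ≤ 2 ^ n ∧ op p (op x y) = q) then 1 else 0 := by
  unfold laverPhi
  exact Finset.sum_ite_sub_ite_eq_ite_and_not (fun r => q ∈ laverColumn n op r)
    (Finset.mem_Icc.2 ⟨hy1, hy2⟩) (Finset.mem_Icc.2 (h.op_mem hx1 hx2 hy1 hy2))
    fun hq => h.laverColumn_op_subset hx1 hx2 hy1 hy2 hq

open Classical in
/-- The cocycle `ψ_{q,n} = Σ_{r ⊑_n q} φ_{r,n}` takes the value `1` on `(x, y)` when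
`q` belongs to the column of `y` but not to the column of `x *_n y`, and `0` otherwise. -/
theorem laver_psi_values (n : ℕ) (op : ℕ → ℕ → ℕ) (h : IsLaverOp n op)
    (q x y : ℕ) (hq1 : 1 ≤ q) (hq2 : q ≤ 2 ^ n)
    (hx1 : 1 ≤ x) (hx2 : x ≤ 2 ^ n) (hy1 : 1 ≤ y) (hy2 : y ≤ 2 ^ n) :
    (∑ r ∈ Finset.Icc 1 (2 ^ n),
        if ∃ p, 1 ≤ p ∧ p ≤ 2 ^ n ∧ op p r = q then laverPhi op r x y else 0) =
      if (∃ p, 1 ≤ p ∧ p ≤ 2 ^ n ∧ op p y = q) ∧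
          ¬ (∃ p, 1 ≤ p ∧ p ≤ 2 ^ n ∧ op p (op x y) = q) then 1 else 0 :=
  laver_psi_values_general n op h q x y hx1 hx2 hy1 hy2
end

section
/- For every n ≥ 1, if φ is a ℤ-valued 3-cocycle for A_n satisfying φ(2^n − 1, y, z) = 0 for all y, z in {1, …, 2^n}, then φ(x, y, z) = 0 for all x, y, z in {1, …, 2^n}. -/
/-- `φ` is a `ℤ`-valued rack 3-cocycle for the Laver table `A_n` with operation `op`. -/
def Is3Cocycle (n : ℕ) (op : ℕ → ℕ → ℕ) (φ : ℕ → ℕ → ℕ → ℤ) : Prop :=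
  ∀ x y z t, 1 ≤ x → x ≤ 2 ^ n → 1 ≤ y → y ≤ 2 ^ n → 1 ≤ z → z ≤ 2 ^ n →
    1 ≤ t → t ≤ 2 ^ n →
    φ (op x y) (op x z) (op x t) + φ x y (op z t) + φ x z t =
      φ x (op y z) (op y t) + φ y z t + φ x y t

namespace IsLaverOp

variable {n : ℕ} {op : ℕ → ℕ → ℕ}

theorem mul_succ (h : IsLaverOp n op) {x y : ℕ} (hx₁ : 1 ≤ x) (hx₂ : x ≤ 2 ^ n)
    (hy₁ : 1 ≤ y) (hy₂ : y < 2 ^ n) : op x (y + 1) = op (op x y) (op x 1) := by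
  rw [← h.2.1 y hy₁ hy₂]
  exact h.2.2.2 x y hx₁ hx₂ hy₁ hy₂.le

theorem top_mul (h : IsLaverOp n op) {y : ℕ} (hy₁ : 1 ≤ y) (hy₂ : y ≤ 2 ^ n) :
    op (2 ^ n) y = y := by
  induction y, hy₁ using Nat.le_induction with
  | base => exact h.2.2.1
  | succ y hy ih =>
    rw [h.mul_succ Nat.one_le_two_pow le_rfl hy (by omega), ih (by omega), h.2.2.1,
      h.2.1 y hy (by omega)]

theorem pred_top_mul (h : IsLaverOp n op) (hn : 1 ≤ n) {y : ℕ} (hy₁ : 1 ≤ y)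
    (hy₂ : y ≤ 2 ^ n) : op (2 ^ n - 1) y = 2 ^ n := by
  have hN : 1 < 2 ^ n := Nat.one_lt_two_pow (by omega)
  have hone : op (2 ^ n - 1) 1 = 2 ^ n := by
    rw [h.2.1 _ (by omega) (by omega)]
    omega
  induction y, hy₁ using Nat.le_induction with
  | base => exact hone
  | succ y hy ih =>
    rw [h.mul_succ (by omega) (by omega) hy (by omega), ih (by omega), hone,
      h.top_mul (by omega) le_rfl]

end IsLaverOp

namespace Is3Cocycle

variable {n : ℕ} {op : ℕ → ℕ → ℕ} {φ : ℕ → ℕ → ℕ → ℤ}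

theorem eq_zero_of_row_eq_zero_of_mul_const (hφ : Is3Cocycle n op φ)
    (hop : ∀ x y, 1 ≤ x → x ≤ 2 ^ n → 1 ≤ y → y ≤ 2 ^ n → 1 ≤ op x y ∧ op x y ≤ 2 ^ n)
    {a c : ℕ} (ha₁ : 1 ≤ a) (ha₂ : a ≤ 2 ^ n)
    (hconst : ∀ y, 1 ≤ y → y ≤ 2 ^ n → op a y = c)
    (hrow : ∀ y z, 1 ≤ y → y ≤ 2 ^ n → 1 ≤ z → z ≤ 2 ^ n → φ a y z = 0)
    {x y z : ℕ} (hx₁ : 1 ≤ x) (hx₂ : x ≤ 2 ^ n) (hy₁ : 1 ≤ y) (hy₂ : y ≤ 2 ^ n)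
    (hz₁ : 1 ≤ z) (hz₂ : z ≤ 2 ^ n) : φ x y z = 0 := by
  have hconst_val : ∀ x y z, 1 ≤ x → x ≤ 2 ^ n → 1 ≤ y → y ≤ 2 ^ n → 1 ≤ z → z ≤ 2 ^ n →
      φ x y z = φ c c c := by
    intro x y z hx₁ hx₂ hy₁ hy₂ hz₁ hz₂
    have hc := hφ a x y z ha₁ ha₂ hx₁ hx₂ hy₁ hy₂ hz₁ hz₂
    obtain ⟨hyz₁, hyz₂⟩ := hop y z hy₁ hy₂ hz₁ hz₂
    obtain ⟨hxy₁, hxy₂⟩ := hop x y hx₁ hx₂ hy₁ hy₂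
    obtain ⟨hxz₁, hxz₂⟩ := hop x z hx₁ hx₂ hz₁ hz₂
    rw [hconst x hx₁ hx₂, hconst y hy₁ hy₂, hconst z hz₁ hz₂, hrow x _ hx₁ hx₂ hyz₁ hyz₂,
      hrow y z hy₁ hy₂ hz₁ hz₂, hrow _ _ hxy₁ hxy₂ hxz₁ hxz₂, hrow x z hx₁ hx₂ hz₁ hz₂] at hc
    linarith
  rw [hconst_val x y z hx₁ hx₂ hy₁ hy₂ hz₁ hz₂, ← hconst_val a a a ha₁ ha₂ ha₁ ha₂ ha₁ ha₂]
  exact hrow a a ha₁ ha₂ ha₁ ha₂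

end Is3Cocycle

/-- A 3-cocycle for `A_n` that vanishes on all triples starting with `2^n − 1`
is the zero cocycle. -/
theorem laver_three_cocycle_vanishing (n : ℕ) (hn : 1 ≤ n)
    (op : ℕ → ℕ → ℕ) (h : IsLaverOp n op)
    (φ : ℕ → ℕ → ℕ → ℤ) (hφ : Is3Cocycle n op φ)
    (hrow : ∀ y z, 1 ≤ y → y ≤ 2 ^ n → 1 ≤ z → z ≤ 2 ^ n → φ (2 ^ n - 1) y z = 0) :
    ∀ x y z, 1 ≤ x → x ≤ 2 ^ n → 1 ≤ y → y ≤ 2 ^ n → 1 ≤ z → z ≤ 2 ^ n →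
      φ x y z = 0 := by
  have hN : 1 < 2 ^ n := Nat.one_lt_two_pow (by omega)
  intro x y z hx₁ hx₂ hy₁ hy₂ hz₁ hz₂
  exact hφ.eq_zero_of_row_eq_zero_of_mul_const h.1 (by omega) (by omega)
    (fun y hy₁ hy₂ => h.pred_top_mul hn hy₁ hy₂) hrow hx₁ hx₂ hy₁ hy₂ hz₁ hz₂
end
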